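/- For an integer k ≥ 0 define the polynomial p_k(λ) = Σ_{m=0}^{k} (i/2)^m · ((m+k)!/(m! (k−m)!)) · λ^{k−m} with complex coefficients. Then: (a) for every k ≥ 1 and every λ ∈ ℂ with p_k(λ) = 0, one has Im λ ≤ −1; and (b) p₁(λ) = λ + i, so λ = −i is a zero of p₁ with Im λ = −1. Consequently the infimum of |Im λ| over all zeros of all p_k, k ≥ 1, equals 1. -/

import Mathlib

noncomputable section

/-- The polynomials whose zeros are the scattering resonances of the unit sphere
in odd dimensions: `p_k(λ) = Σ_{m=0}^{k} (i/2)^m ((m+k)!/(m!(k-m)!)) λ^{k-m}`. -/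
def pk (k : ℕ) (z : ℂ) : ℂ :=
  ∑ m ∈ Finset.range (k + 1),
    (Complex.I / 2) ^ m
      * ((Nat.factorial (m + k) : ℂ)
          / ((Nat.factorial m : ℂ) * (Nat.factorial (k - m) : ℂ)))
      * z ^ (k - m)

/-! ### Auxiliary machinery.

We express `pk k z = I^k · Φ k k (-I z)` where `Φ n K` is a two-parameter family of
"generalized reverse Bessel" polynomials with positive coefficients, satisfying a
three-term recurrence in the parameters that yields a continued-fraction expansion
with positive coefficients and shifts `w + j`, from which nonvanishing of `Φ k k`
on `Re w > -1` follows. -/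

/-- Coefficients of the generalized reverse Bessel polynomials. -/
def resA (n K m : ℕ) : ℂ :=
  (n.choose m : ℂ) * (Nat.factorial (K + m) : ℂ) / ((Nat.factorial K : ℂ) * 2 ^ m)

/-- Generalized reverse Bessel polynomials; `resPhi k k` is the reverse Bessel
polynomial `θ_k`, and `pk k z = I^k θ_k(-iz)`. -/
def resPhi (n K : ℕ) (w : ℂ) : ℂ :=
  ∑ m ∈ Finset.range (n+1), resA n K m * w ^ (n - m)

lemma resA_zero (n K : ℕ) : resA n K 0 = 1 := by
  simp [resA, div_self, Nat.cast_ne_zero.mpr (Nat.factorial_ne_zero K)]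

lemma resPhi_zero (K : ℕ) (w : ℂ) : resPhi 0 K w = 1 := by simp [resPhi, resA_zero]

lemma resPhi_one (K : ℕ) (w : ℂ) : resPhi 1 K w = w + ((K:ℂ)+1)/2 := by
  have h2 : ((Nat.factorial K : ℂ)) ≠ 0 := Nat.cast_ne_zero.mpr (Nat.factorial_ne_zero K)
  simp [resPhi, Finset.sum_range_succ, resA, Nat.factorial_succ]
  field_simp

/-- Main coefficient identity behind the recurrence. -/
lemma resA_key (n K s : ℕ) :
    resA (n+2) K (s+2) = resA (n+1) (K+1) (s+2)
      + (((K:ℂ) - n)/2) * resA (n+1) (K+1) (s+1)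
      + ((((n:ℂ)+1) * ((K:ℂ)+2))/4) * resA n (K+2) s := by
  have hfK : ((Nat.factorial K : ℂ)) ≠ 0 := Nat.cast_ne_zero.mpr (Nat.factorial_ne_zero K)
  have hK1 : ((K:ℂ)+1) ≠ 0 := by
    have : ((K+1:ℕ):ℂ) ≠ 0 := Nat.cast_ne_zero.mpr (Nat.succ_ne_zero K)
    push_cast at this; exact this
  have hK2 : ((K:ℂ)+2) ≠ 0 := by
    intro h
    have h2 : ((K+2:ℕ):ℂ) ≠ 0 := Nat.cast_ne_zero.mpr (by omega)
    push_cast at h2; exact h2 (by linear_combination h)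
  have h2s : ((2:ℂ))^s ≠ 0 := pow_ne_zero s two_ne_zero
  set F := (Nat.factorial (K + (s+2)) : ℂ) with hF
  set G := (Nat.factorial K : ℂ) with hG
  set μ := F / (G * 2^s * (((K:ℂ)+1) * (((K:ℂ)+2) * 4))) with hμ
  have hA0 : resA (n+2) K (s+2) = ((n+2).choose (s+2) : ℂ) * (((K:ℂ)+1) * ((K:ℂ)+2)) * μ := by
    rw [hμ, resA, ← hF, ← hG]; field_simp; ring
  have hA1 : resA (n+1) (K+1) (s+2)
      = ((n+1).choose (s+2) : ℂ) * (((K:ℂ)+(s:ℂ)+3) * ((K:ℂ)+2)) * μ := by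
    rw [hμ, resA]
    have f1 : (K+1) + (s+2) = (K + (s+2)) + 1 := by omega
    rw [f1, Nat.factorial_succ (K + (s+2)), Nat.factorial_succ K]
    push_cast
    rw [← hF, ← hG]
    field_simp
    ring
  have hA2 : resA (n+1) (K+1) (s+1) = ((n+1).choose (s+1) : ℂ) * (((K:ℂ)+2) * 2) * μ := by
    rw [hμ, resA]
    have f2 : (K+1) + (s+1) = K + (s+2) := by omega
    rw [f2, Nat.factorial_succ K]
    push_cast
    rw [← hF, ← hG]
    field_simp
    ring
  have hA3 : resA n (K+2) s = (n.choose s : ℂ) * 4 * μ := by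
    rw [hμ, resA]
    have f3 : (K+2) + s = K + (s+2) := by omega
    have f5 : Nat.factorial (K+2) = (K+2) * ((K+1) * Nat.factorial K) := by
      rw [Nat.factorial_succ, Nat.factorial_succ]
    rw [f3, f5]
    push_cast
    rw [← hF, ← hG]
    field_simp
  rw [hA0, hA1, hA2, hA3]
  have e1 : ((Nat.choose (n+2) (s+2) : ℂ))
      = (Nat.choose (n+1) (s+1) : ℂ) + (Nat.choose (n+1) (s+2) : ℂ) := by
    exact_mod_cast congrArg (Nat.cast : ℕ → ℂ) (Nat.choose_succ_succ (n+1) (s+1))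
  have e2 : ((Nat.choose (n+1) (s+1) : ℂ))
      = (Nat.choose n s : ℂ) + (Nat.choose n (s+1) : ℂ) := by
    exact_mod_cast congrArg (Nat.cast : ℕ → ℂ) (Nat.choose_succ_succ n s)
  have e3 : ((n:ℂ)+1) * (Nat.choose n (s+1) : ℂ) = (Nat.choose (n+1) (s+2) : ℂ) * ((s:ℂ)+2) := by
    exact_mod_cast congrArg (Nat.cast : ℕ → ℂ) (Nat.add_one_mul_choose_eq n (s+1))
  linear_combination ((((K:ℂ)+1) * e1 + ((n:ℂ)+1) * e2 + e3) * (((K:ℂ)+2) * μ))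

lemma resA_one (n K : ℕ) :
    resA (n+2) K 1 = resA (n+1) (K+1) 1 + (((K:ℂ) - n)/2) * resA (n+1) (K+1) 0 := by
  have hfK : ((Nat.factorial K : ℂ)) ≠ 0 := Nat.cast_ne_zero.mpr (Nat.factorial_ne_zero K)
  have hK1 : ((K:ℂ)+1) ≠ 0 := by
    have : ((K+1:ℕ):ℂ) ≠ 0 := Nat.cast_ne_zero.mpr (Nat.succ_ne_zero K)
    push_cast at this; exact this
  rw [resA_zero]
  unfold resA
  simp only [Nat.choose_one_right]
  rw [Nat.factorial_succ (K+1), Nat.factorial_succ K]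
  push_cast
  field_simp
  ring

/-- The three-term recurrence in the parameters. -/
lemma resPhi_rec (n K : ℕ) (w : ℂ) :
    resPhi (n+2) K w = (w + ((K:ℂ) - (n:ℂ))/2) * resPhi (n+1) (K+1) w
      + ((((n:ℂ)+1) * ((K:ℂ)+2))/4) * resPhi n (K+2) w := by
  set c : ℂ := ((K:ℂ) - (n:ℂ))/2 with hc
  set c' : ℂ := (((n:ℂ)+1) * ((K:ℂ)+2))/4 with hc'
  have h1 : w * resPhi (n+1) (K+1) w
      = ∑ m ∈ Finset.range (n+3), resA (n+1) (K+1) m * w ^ (n+2-m) := by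
    rw [Finset.sum_range_succ]
    have hz : resA (n+1) (K+1) (n+2) = 0 := by
      simp [resA, Nat.choose_eq_zero_of_lt (by omega : n+1 < n+2)]
    rw [hz]
    rw [resPhi, Finset.mul_sum]
    rw [zero_mul, add_zero]
    refine Finset.sum_congr rfl (fun m hm => ?_)
    have hm' : m ≤ n+1 := by simpa using Nat.lt_succ_iff.mp (Finset.mem_range.mp hm)
    rw [show n+2-m = (n+1-m)+1 from by omega, pow_succ]
    ring
  have h2 : c * resPhi (n+1) (K+1) w
      = ∑ m ∈ Finset.range (n+3),
          (if m = 0 then 0 else c * resA (n+1) (K+1) (m-1) * w ^ (n+2-m)) := by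
    rw [Finset.sum_range_succ' _ (n+2)]
    simp only [Nat.succ_sub_succ, Nat.sub_zero, if_neg (Nat.succ_ne_zero _), if_true]
    rw [add_zero, resPhi, Finset.mul_sum]
    refine Finset.sum_congr rfl (fun m hm => by ring)
  have h3 : c' * resPhi n (K+2) w
      = ∑ m ∈ Finset.range (n+3),
          (if m ≤ 1 then 0 else c' * resA n (K+2) (m-2) * w ^ (n+2-m)) := by
    rw [Finset.sum_range_succ' _ (n+2), Finset.sum_range_succ' _ (n+1)]
    simp only [Nat.succ_sub_succ, Nat.add_sub_cancel]
    norm_num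
    rw [resPhi, Finset.mul_sum]
    refine Finset.sum_congr rfl (fun m hm => by ring)
  have expand : (w + c) * resPhi (n+1) (K+1) w + c' * resPhi n (K+2) w
      = w * resPhi (n+1) (K+1) w + c * resPhi (n+1) (K+1) w + c' * resPhi n (K+2) w := by ring
  rw [expand, h1, h2, h3, resPhi, ← Finset.sum_add_distrib, ← Finset.sum_add_distrib]
  refine Finset.sum_congr rfl (fun m hm => ?_)
  match m with
  | 0 => simp [resA_zero]
  | 1 =>
    simp only [if_neg (by omega : ¬(1:ℕ) = 0), if_pos (by omega : (1:ℕ) ≤ 1), add_zero]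
    rw [show (1:ℕ)-1 = 0 from rfl, resA_one]
    ring
  | (s+2) =>
    simp only [if_neg (by omega : ¬(s+2:ℕ) = 0), if_neg (by omega : ¬(s+2:ℕ) ≤ 1)]
    rw [show s+2-1 = s+1 from by omega, show s+2-2 = s from by omega, resA_key]
    ring

/-- Top coefficient identity (level `j = 0`, diagonal case). -/
lemma resA_top_key (k s : ℕ) :
    resA (k+2) (k+2) (s+2) = resA (k+1) (k+1) (s+2)
      + ((k:ℂ)+2) * resA (k+1) (k+1) (s+1)
      + ((((k:ℂ)+2) * ((k:ℂ)+1))/2) * resA k (k+2) s := by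
  have hfk : ((Nat.factorial k : ℂ)) ≠ 0 := Nat.cast_ne_zero.mpr (Nat.factorial_ne_zero k)
  have hk1 : ((k:ℂ)+1) ≠ 0 := by
    have : ((k+1:ℕ):ℂ) ≠ 0 := Nat.cast_ne_zero.mpr (Nat.succ_ne_zero k)
    push_cast at this; exact this
  have hk2 : ((k:ℂ)+2) ≠ 0 := by
    intro h
    have h2 : ((k+2:ℕ):ℂ) ≠ 0 := Nat.cast_ne_zero.mpr (by omega)
    push_cast at h2; exact h2 (by linear_combination h)
  have h2s : ((2:ℂ))^s ≠ 0 := pow_ne_zero s two_ne_zero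
  set F := (Nat.factorial (k + s + 2) : ℂ) with hF
  set G := (Nat.factorial k : ℂ) with hG
  set μ := F / (G * 2^s * (((k:ℂ)+1) * (((k:ℂ)+2) * 4))) with hμ
  have hA0 : resA (k+2) (k+2) (s+2)
      = ((k+2).choose (s+2) : ℂ) * (((k:ℂ)+(s:ℂ)+4) * ((k:ℂ)+(s:ℂ)+3)) * μ := by
    rw [hμ, resA]
    have f1 : (k+2) + (s+2) = ((k + s + 2) + 1) + 1 := by omega
    have f5 : Nat.factorial (k+2) = (k+2) * ((k+1) * Nat.factorial k) := by
      rw [Nat.factorial_succ, Nat.factorial_succ]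
    rw [f1, Nat.factorial_succ ((k+s+2)+1), Nat.factorial_succ (k+s+2), f5]
    push_cast
    rw [← hF, ← hG]
    field_simp
    ring
  have hA1 : resA (k+1) (k+1) (s+2)
      = ((k+1).choose (s+2) : ℂ) * (((k:ℂ)+(s:ℂ)+3) * (((k:ℂ)+2))) * μ := by
    rw [hμ, resA]
    have f1 : (k+1) + (s+2) = (k + s + 2) + 1 := by omega
    rw [f1, Nat.factorial_succ (k+s+2), Nat.factorial_succ k]
    push_cast
    rw [← hF, ← hG]
    field_simp
    ring
  have hA2 : resA (k+1) (k+1) (s+1)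
      = ((k+1).choose (s+1) : ℂ) * (((k:ℂ)+2) * 2) * μ := by
    rw [hμ, resA]
    have f2 : (k+1) + (s+1) = k + s + 2 := by omega
    rw [f2, Nat.factorial_succ k]
    push_cast
    rw [← hF, ← hG]
    field_simp
    ring
  have hA3 : resA k (k+2) s = (k.choose s : ℂ) * 4 * μ := by
    rw [hμ, resA]
    have f3 : (k+2) + s = k + s + 2 := by omega
    have f5 : Nat.factorial (k+2) = (k+2) * ((k+1) * Nat.factorial k) := by
      rw [Nat.factorial_succ, Nat.factorial_succ]
    rw [f3, f5]
    push_cast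
    rw [← hF, ← hG]
    field_simp
  rw [hA0, hA1, hA2, hA3]
  have e1 : ((Nat.choose (k+2) (s+2) : ℂ))
      = (Nat.choose (k+1) (s+1) : ℂ) + (Nat.choose (k+1) (s+2) : ℂ) := by
    exact_mod_cast congrArg (Nat.cast : ℕ → ℂ) (Nat.choose_succ_succ (k+1) (s+1))
  have e2 : ((Nat.choose (k+1) (s+1) : ℂ))
      = (Nat.choose k s : ℂ) + (Nat.choose k (s+1) : ℂ) := by
    exact_mod_cast congrArg (Nat.cast : ℕ → ℂ) (Nat.choose_succ_succ k s)
  have e4 : ((k:ℂ)+1) * (Nat.choose k (s+1) : ℂ) = (Nat.choose (k+1) (s+2) : ℂ) * ((s:ℂ)+2) := by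
    exact_mod_cast congrArg (Nat.cast : ℕ → ℂ) (Nat.add_one_mul_choose_eq k (s+1))
  have e5 : ((k:ℂ)+1) * (Nat.choose k s : ℂ) = (Nat.choose (k+1) (s+1) : ℂ) * ((s:ℂ)+1) := by
    exact_mod_cast congrArg (Nat.cast : ℕ → ℂ) (Nat.add_one_mul_choose_eq k s)
  linear_combination (((k:ℂ)+(s:ℂ)+4) * ((k:ℂ)+(s:ℂ)+3) * e1
      - ((k:ℂ)+(s:ℂ)+3) * e4
      - ((k:ℂ)+1) * ((k:ℂ)+(s:ℂ)+3) * e2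
      - (((k:ℂ)+(s:ℂ)+3) + 2*((k:ℂ)+2)) * e5) * μ

lemma resA_one_val (n K : ℕ) : resA n K 1 = (n:ℂ) * ((K:ℂ)+1) / 2 := by
  have hfK : ((Nat.factorial K : ℂ)) ≠ 0 := Nat.cast_ne_zero.mpr (Nat.factorial_ne_zero K)
  unfold resA
  rw [Nat.choose_one_right, Nat.factorial_succ K]
  push_cast
  field_simp

lemma resA_top_one (k : ℕ) :
    resA (k+2) (k+2) 1 = resA (k+1) (k+1) 1 + ((k:ℂ)+2) * resA (k+1) (k+1) 0 := by
  rw [resA_one_val, resA_one_val, resA_zero]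
  push_cast
  ring

/-- Top identity: the diagonal polynomials satisfy the `j = 0` step. -/
lemma resPhi_top (k : ℕ) (w : ℂ) :
    resPhi (k+2) (k+2) w = (w + ((k:ℂ)+2)) * resPhi (k+1) (k+1) w
      + ((((k:ℂ)+2) * ((k:ℂ)+1))/2) * resPhi k (k+2) w := by
  set c : ℂ := ((k:ℂ)+2) with hc
  set c' : ℂ := (((k:ℂ)+2) * ((k:ℂ)+1))/2 with hc'
  have h1 : w * resPhi (k+1) (k+1) w
      = ∑ m ∈ Finset.range (k+3), resA (k+1) (k+1) m * w ^ (k+2-m) := by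
    rw [Finset.sum_range_succ]
    have hz : resA (k+1) (k+1) (k+2) = 0 := by
      simp [resA, Nat.choose_eq_zero_of_lt (by omega : k+1 < k+2)]
    rw [hz]
    rw [resPhi, Finset.mul_sum]
    rw [zero_mul, add_zero]
    refine Finset.sum_congr rfl (fun m hm => ?_)
    have hm' : m ≤ k+1 := by simpa using Nat.lt_succ_iff.mp (Finset.mem_range.mp hm)
    rw [show k+2-m = (k+1-m)+1 from by omega, pow_succ]
    ring
  have h2 : c * resPhi (k+1) (k+1) w
      = ∑ m ∈ Finset.range (k+3),
          (if m = 0 then 0 else c * resA (k+1) (k+1) (m-1) * w ^ (k+2-m)) := by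
    rw [Finset.sum_range_succ' _ (k+2)]
    simp only [Nat.succ_sub_succ, Nat.sub_zero, if_neg (Nat.succ_ne_zero _), if_true]
    rw [add_zero, resPhi, Finset.mul_sum]
    refine Finset.sum_congr rfl (fun m hm => by ring)
  have h3 : c' * resPhi k (k+2) w
      = ∑ m ∈ Finset.range (k+3),
          (if m ≤ 1 then 0 else c' * resA k (k+2) (m-2) * w ^ (k+2-m)) := by
    rw [Finset.sum_range_succ' _ (k+2), Finset.sum_range_succ' _ (k+1)]
    simp only [Nat.succ_sub_succ, Nat.add_sub_cancel]
    norm_num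
    rw [resPhi, Finset.mul_sum]
    refine Finset.sum_congr rfl (fun m hm => by ring)
  have expand : (w + c) * resPhi (k+1) (k+1) w + c' * resPhi k (k+2) w
      = w * resPhi (k+1) (k+1) w + c * resPhi (k+1) (k+1) w + c' * resPhi k (k+2) w := by ring
  rw [expand, h1, h2, h3, resPhi, ← Finset.sum_add_distrib, ← Finset.sum_add_distrib]
  refine Finset.sum_congr rfl (fun m hm => ?_)
  match m with
  | 0 => simp [resA_zero]
  | 1 =>
    simp only [if_neg (by omega : ¬(1:ℕ) = 0), if_pos (by omega : (1:ℕ) ≤ 1), add_zero]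
    rw [show (1:ℕ)-1 = 0 from rfl, resA_top_one]
    ring
  | (s+2) =>
    simp only [if_neg (by omega : ¬(s+2:ℕ) = 0), if_neg (by omega : ¬(s+2:ℕ) ≤ 1)]
    rw [show s+2-1 = s+1 from by omega, show s+2-2 = s from by omega, resA_top_key]
    ring

/-- Continued-fraction positivity: ratios of consecutive `resPhi`'s have positive
real part when `Re w > -1`. -/
lemma resPhi_pos (n : ℕ) : ∀ K : ℕ, n+1 ≤ K → ∀ w : ℂ, -1 < w.re →
    resPhi n (K+1) w ≠ 0 ∧ 0 < (resPhi (n+1) K w / resPhi n (K+1) w).re := by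
  induction n with
  | zero =>
    intro K hK w hw
    rw [resPhi_zero, resPhi_one]
    refine ⟨one_ne_zero, ?_⟩
    rw [div_one]
    have hcast : ((K:ℂ)+1)/2 = (((((K:ℝ))+1)/2 : ℝ) : ℂ) := by push_cast; ring
    rw [hcast, Complex.add_re, Complex.ofReal_re]
    have hK1 : (1:ℝ) ≤ (K:ℝ) := by exact_mod_cast hK
    linarith
  | succ n ih =>
    intro K hK w hw
    obtain ⟨hE, hR⟩ := ih (K+1) (by omega) w hw
    set D := resPhi (n+1) (K+1) w with hD'
    set E := resPhi n (K+2) w with hE'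
    have hD : D ≠ 0 := by
      intro h0
      rw [h0, zero_div] at hR
      simp at hR
    refine ⟨hD, ?_⟩
    rw [resPhi_rec n K w]
    have hsplit : ((w + ((K:ℂ) - (n:ℂ))/2) * D + ((((n:ℂ)+1) * ((K:ℂ)+2))/4) * E) / D
        = (w + ((K:ℂ) - (n:ℂ))/2) + ((((n:ℂ)+1) * ((K:ℂ)+2))/4) * (D/E)⁻¹ := by
      rw [inv_div]
      field_simp
    rw [hsplit]
    have hc : ((K:ℂ) - (n:ℂ))/2 = (((((K:ℝ)) - (n:ℝ))/2 : ℝ) : ℂ) := by push_cast; ring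
    have hc' : (((n:ℂ)+1) * ((K:ℂ)+2))/4 = (((((n:ℝ)+1) * ((K:ℝ)+2))/4 : ℝ) : ℂ) := by
      push_cast; ring
    rw [hc, hc', Complex.add_re, Complex.add_re, Complex.ofReal_re, Complex.re_ofReal_mul,
      Complex.inv_re]
    have h1 : (0:ℝ) < ((n:ℝ)+1) * ((K:ℝ)+2)/4 := by positivity
    have h2 : 0 ≤ (D/E).re / Complex.normSq (D/E) := by
      apply div_nonneg (le_of_lt hR) (Complex.normSq_nonneg _)
    have h3 : (2:ℝ) ≤ (K:ℝ) - (n:ℝ) := by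
      have : (n:ℝ) + 2 ≤ (K:ℝ) := by exact_mod_cast hK
      linarith
    nlinarith [mul_nonneg (le_of_lt h1) h2]

/-- The reverse Bessel polynomials do not vanish for `Re w > -1`. -/
lemma resPhi_kk_ne (k : ℕ) (hk : 1 ≤ k) (w : ℂ) (hw : -1 < w.re) : resPhi k k w ≠ 0 := by
  match k, hk with
  | 1, _ =>
    rw [resPhi_one]
    intro h0
    have := congrArg Complex.re h0
    rw [Complex.add_re, Complex.zero_re] at this
    have h1 : (((1:ℕ):ℂ)+1)/2 = ((1:ℝ) : ℂ) := by norm_num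
    rw [h1, Complex.ofReal_re] at this
    linarith
  | (k+2), _ =>
    obtain ⟨hE, hR⟩ := resPhi_pos k (k+1) (le_refl _) w hw
    set D := resPhi (k+1) (k+1) w with hD'
    set E := resPhi k (k+2) w with hE'
    have hD : D ≠ 0 := by
      intro h0
      rw [h0, zero_div] at hR
      simp at hR
    rw [resPhi_top]
    intro h0
    have hpos : 0 < (((w + ((k:ℂ)+2)) * D + ((((k:ℂ)+2) * ((k:ℂ)+1))/2) * E) / D).re := by
      have hsplit : ((w + ((k:ℂ)+2)) * D + ((((k:ℂ)+2) * ((k:ℂ)+1))/2) * E) / D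
          = (w + ((k:ℂ)+2)) + ((((k:ℂ)+2) * ((k:ℂ)+1))/2) * (D/E)⁻¹ := by
        rw [inv_div]
        field_simp
      rw [hsplit]
      have hc : ((k:ℂ)+2) = ((((k:ℝ)+2) : ℝ) : ℂ) := by push_cast; ring
      have hc' : (((k:ℂ)+2) * ((k:ℂ)+1))/2 = (((((k:ℝ)+2) * ((k:ℝ)+1))/2 : ℝ) : ℂ) := by
        push_cast; ring
      rw [hc', hc, Complex.add_re, Complex.add_re, Complex.ofReal_re, Complex.re_ofReal_mul,
        Complex.inv_re]
      have h1 : (0:ℝ) < ((k:ℝ)+2) * ((k:ℝ)+1)/2 := by positivity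
      have h2 : 0 ≤ (D/E).re / Complex.normSq (D/E) := by
        apply div_nonneg (le_of_lt hR) (Complex.normSq_nonneg _)
      have h4 : (0:ℝ) ≤ (k:ℝ) := Nat.cast_nonneg k
      nlinarith [mul_nonneg (le_of_lt h1) h2]
    rw [h0, zero_div] at hpos
    simp at hpos

/-- The bridge: `pk k z = I^k · resPhi k k (-iz)`. -/
lemma pk_phi (k : ℕ) (z : ℂ) : pk k z = Complex.I^k * resPhi k k (-(Complex.I*z)) := by
  rw [pk, resPhi, Finset.mul_sum]
  refine Finset.sum_congr rfl (fun m hm => ?_)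
  have hm' : m ≤ k := Nat.lt_succ_iff.mp (Finset.mem_range.mp hm)
  have hneg : -(Complex.I*z) = (-Complex.I)*z := by ring
  rw [hneg, mul_pow]
  have hI : Complex.I^k * (-Complex.I)^(k-m) = Complex.I^m := by
    have hsplit : Complex.I^k = Complex.I^m * Complex.I^(k-m) := by
      rw [← pow_add]; congr 1; omega
    rw [hsplit, mul_assoc, ← mul_pow]
    have : Complex.I * -Complex.I = 1 := by
      rw [mul_neg, Complex.I_mul_I, neg_neg]
    rw [this, one_pow, mul_one]
  have hfac : (Nat.choose k m : ℂ) * (Nat.factorial m : ℂ) * (Nat.factorial (k-m) : ℂ)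
      = (Nat.factorial k : ℂ) := by
    exact_mod_cast congrArg (Nat.cast : ℕ → ℂ) (Nat.choose_mul_factorial_mul_factorial hm')
  have hm0 : ((Nat.factorial m : ℂ)) ≠ 0 := Nat.cast_ne_zero.mpr (Nat.factorial_ne_zero m)
  have hkm0 : ((Nat.factorial (k-m) : ℂ)) ≠ 0 :=
    Nat.cast_ne_zero.mpr (Nat.factorial_ne_zero (k-m))
  have hk0 : ((Nat.factorial k : ℂ)) ≠ 0 := Nat.cast_ne_zero.mpr (Nat.factorial_ne_zero k)
  have h20 : ((2:ℂ))^m ≠ 0 := pow_ne_zero m two_ne_zero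
  rw [resA, Nat.add_comm m k]
  rw [div_pow]
  rw [← hfac, ← hI]
  have hc0 : ((Nat.choose k m : ℂ)) ≠ 0 := Nat.cast_ne_zero.mpr (Nat.choose_pos hm').ne'
  field_simp

lemma pk_one_eq (z : ℂ) : pk 1 z = z + Complex.I := by
  rw [pk]
  rw [Finset.sum_range_succ, Finset.sum_range_succ, Finset.sum_range_zero]
  norm_num [Nat.factorial]

/-- (a) every zero of `p_k`, `k ≥ 1`, has `Im λ ≤ -1`; (b) `p₁(λ) = λ + i`, so
`λ = -i` is a zero of `p₁` with `Im λ = -1`; consequently the infimum of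
`|Im λ|` over all zeros of all `p_k`, `k ≥ 1`, equals `1`. -/
theorem sphere_resonance_gap :
    (∀ k : ℕ, 1 ≤ k → ∀ z : ℂ, pk k z = 0 → z.im ≤ -1)
      ∧ (∀ z : ℂ, pk 1 z = z + Complex.I)
      ∧ sInf {r : ℝ | ∃ k : ℕ, 1 ≤ k ∧ ∃ z : ℂ, pk k z = 0 ∧ r = |z.im|} = 1 := by
  have parta : ∀ k : ℕ, 1 ≤ k → ∀ z : ℂ, pk k z = 0 → z.im ≤ -1 := by
    intro k hk z h0
    by_contra hlt
    push_neg at hlt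
    have hw : (-(Complex.I*z)).re = z.im := by simp [Complex.mul_re]
    have hphi : resPhi k k (-(Complex.I*z)) = 0 := by
      have hb := pk_phi k z
      rw [h0] at hb
      have hIk : Complex.I^k ≠ 0 := pow_ne_zero k Complex.I_ne_zero
      rcases mul_eq_zero.mp hb.symm with h | h
      · exact absurd h hIk
      · exact h
    exact resPhi_kk_ne k hk _ (by rw [hw]; exact hlt) hphi
  refine ⟨parta, pk_one_eq, ?_⟩
  have hmem : (1:ℝ) ∈ {r : ℝ | ∃ k : ℕ, 1 ≤ k ∧ ∃ z : ℂ, pk k z = 0 ∧ r = |z.im|} := by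
    refine ⟨1, le_refl 1, -Complex.I, ?_, ?_⟩
    · rw [pk_one_eq]; ring
    · simp
  have hlb : ∀ r ∈ {r : ℝ | ∃ k : ℕ, 1 ≤ k ∧ ∃ z : ℂ, pk k z = 0 ∧ r = |z.im|}, (1:ℝ) ≤ r := by
    rintro r ⟨k, hk, z, hz, rfl⟩
    have him := parta k hk z hz
    exact le_abs.mpr (Or.inr (by linarith))
  apply le_antisymm
  · exact csInf_le ⟨1, hlb⟩ hmem
  · exact le_csInf ⟨1, hmem⟩ hlb

end
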